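/- Λ is invariant under the distributional transform: Λ(Y|X) = Λ( F_Y(Y) | (F_{X₁}(X₁), …, F_{X_p}(X_p)) ), where F_Z denotes the cumulative distribution function of the real random variable Z. -/

import Mathlib

open MeasureTheory ProbabilityTheory Set Filter Topology

/-- The (nonparametric) relative effect `Ψ(μ, ν) = ∫ μ((-∞,y)) + (1/2) μ({y}) dν(y)`. -/
noncomputable def relEffect (μ ν : Measure ℝ) : ℝ :=
  ∫ y, ((μ (Set.Iio y)).toReal + (1 / 2) * (μ {y}).toReal) ∂ν

/-- `α(μ) = 1 - ∫ μ({x}) dμ(x) = 1 - P(X = X*)`, the non-discrete mass of `μ`. -/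
noncomputable def alphaCoeff {E : Type*} [MeasurableSpace E] (μ : Measure E) : ℝ :=
  1 - ∫ x, (μ {x}).toReal ∂μ

/-- The coefficient of separation `Λ(Y|X)`. -/
noncomputable def sepCoeff {Ω E : Type*} [MeasurableSpace Ω] [MeasurableSpace E]
    (P : Measure Ω) [IsFiniteMeasure P] (Y : Ω → ℝ) (X : Ω → E) : ℝ :=
  (alphaCoeff (P.map X))⁻¹ *
    ∫ x : E × E,
      (relEffect (condDistrib Y X P x.1) (condDistrib Y X P x.2)
        - relEffect (condDistrib Y X P x.2) (condDistrib Y X P x.1)) ^ 2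
      ∂((P.map X).prod (P.map X))

/-- A random variable is non-degenerate if it is not a.s. constant. -/
def Nondegenerate {Ω α : Type*} [MeasurableSpace Ω] (P : Measure Ω) (Z : Ω → α) : Prop :=
  ¬ ∃ c, ∀ᵐ ω ∂P, Z ω = c

/-- The cumulative distribution function of a real random variable: `F_Z(z) = P(Z ≤ z)`. -/
noncomputable def rvCdf {Ω : Type*} [MeasurableSpace Ω] (P : Measure Ω) (Z : Ω → ℝ) : ℝ → ℝ :=
  fun z => (P {ω | Z ω ≤ z}).toReal

/-!
A distribution function `F` is strictly increasing on a set of full measure: the points `y` with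
`F z < F y` for all `z < y`; the other points are covered by countably many null plateaus of `F`.
The relative effect only sees the order of the values and the atoms, and `α` only sees the atoms,
so both are unchanged by maps that are strictly increasing, resp. injective, on conull sets. A
measurable map `G` of a standard Borel space that is injective on a conull set has a measurable
a.e. left inverse, so the conditional law of `F(Y)` given `G(X) = G x` is the image under `F` of
the conditional law of `Y` given `X = x`.
-/

namespace StieltjesFunction

lemma measure_setOf_lt_and_le_eq_zero (f : StieltjesFunction ℝ) (q : ℝ) :
    f.measure {y | q < y ∧ f y ≤ f q} = 0 := by
  set T := {y | q < y ∧ f y ≤ f q}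
  have null_Ioc : ∀ w ∈ T, f.measure (Ioc q w) = 0 := fun w hw => by
    rw [f.measure_Ioc, ENNReal.ofReal_eq_zero, sub_nonpos]
    exact hw.2
  refine measure_null_of_locally_null T fun y hy => ?_
  by_cases h : ∃ w ∈ T, y < w
  · obtain ⟨w, hw, hyw⟩ := h
    refine ⟨T ∩ Iio w, inter_mem_nhdsWithin T (Iio_mem_nhds hyw), ?_⟩
    exact measure_mono_null (t := Ioc q w) (fun z hz => ⟨hz.1.1, hz.2.le⟩) (null_Ioc w hw)
  · push Not at h
    exact ⟨T, self_mem_nhdsWithin,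
      measure_mono_null (t := Ioc q y) (fun z hz => ⟨hz.1, h z hz⟩) (null_Ioc y hy)⟩

lemma ae_lt_of_lt (f : StieltjesFunction ℝ) : ∀ᵐ y ∂f.measure, ∀ z < y, f z < f y := by
  have h : ∀ᵐ y ∂f.measure, ∀ q : ℚ, y ∉ {y | (q : ℝ) < y ∧ f y ≤ f q} :=
    ae_all_iff.2 fun q => measure_eq_zero_iff_ae_notMem.1 (f.measure_setOf_lt_and_le_eq_zero q)
  filter_upwards [h] with y hy z hzy
  obtain ⟨q, hzq, hqy⟩ := exists_rat_btwn hzy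
  exact (f.mono hzq.le).trans_lt (not_le.1 fun h => hy q ⟨hqy, h⟩)

end StieltjesFunction

namespace ProbabilityTheory

lemma exists_ae_mem_strictMonoOn_cdf (ν : Measure ℝ) [IsProbabilityMeasure ν] :
    ∃ B : Set ℝ, (∀ᵐ y ∂ν, y ∈ B) ∧ StrictMonoOn (cdf ν) B :=
  ⟨{y | ∀ z < y, cdf ν z < cdf ν y},
    by simpa only [measure_cdf, mem_ofPred_eq] using (cdf ν).ae_lt_of_lt,
    fun _ _ _ hb hab => hb _ hab⟩

lemma exists_ae_mem_injOn_cdf_marginals {ι : Type*} [Countable ι] (μ : Measure (ι → ℝ))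
    [IsProbabilityMeasure μ] :
    ∃ A : Set (ι → ℝ), (∀ᵐ x ∂μ, x ∈ A) ∧
      InjOn (fun x i => cdf (μ.map fun x => x i) (x i)) A := by
  have (i : ι) := Measure.isProbabilityMeasure_map (μ := μ) (measurable_pi_apply i).aemeasurable
  choose B hB hFB using fun i => exists_ae_mem_strictMonoOn_cdf (μ.map fun x => x i)
  refine ⟨univ.pi B, ?_, fun x hx y hy hxy => funext fun i =>
    (hFB i).injOn (hx i trivial) (hy i trivial) (congrFun hxy i)⟩
  simp only [mem_univ_pi, ae_all_iff]
  exact fun i => ae_of_ae_map (measurable_pi_apply i).aemeasurable (hB i)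

end ProbabilityTheory

lemma rvCdf_eq_cdf_map {Ω : Type*} [MeasurableSpace Ω] (P : Measure Ω) [IsProbabilityMeasure P]
    {Z : Ω → ℝ} (hZ : Measurable Z) : rvCdf P Z = cdf (P.map Z) := by
  have := Measure.isProbabilityMeasure_map (μ := P) hZ.aemeasurable
  ext z
  rw [cdf_eq_real, measureReal_def, Measure.map_apply hZ measurableSet_Iic]
  rfl

lemma MeasureTheory.Measure.measurable_measure_singleton {E : Type*} [MeasurableSpace E]
    [MeasurableEq E] (μ : Measure E) [SFinite μ] : Measurable fun x => μ {x} := by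
  have h : ∀ x : E, Prod.mk x ⁻¹' diagonal E = {x} := fun x => by
    ext z
    exact eq_comm
  simpa only [h] using measurable_measure_prodMk_left (ν := μ) measurableSet_diagonal

lemma measurable_relEffect_integrand (μ : Measure ℝ) [SFinite μ] :
    Measurable fun y => (μ (Iio y)).toReal + 1 / 2 * (μ {y}).toReal :=
  (Monotone.measurable fun _ _ h => measure_mono (Iio_subset_Iio h)).ennreal_toReal.add
    ((μ.measurable_measure_singleton).ennreal_toReal.const_mul _)

lemma measurable_relEffect {α : Type*} [MeasurableSpace α] (κ η : Kernel α ℝ)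
    [IsSFiniteKernel κ] [IsSFiniteKernel η] :
    Measurable fun a => relEffect (κ a) (η a) := by
  set κ₂ : Kernel (α × ℝ) ℝ := κ.comap Prod.fst measurable_fst
  have hIio : Measurable fun p : α × ℝ => κ p.1 (Iio p.2) :=
    Kernel.measurable_kernel_prodMk_left (κ := κ₂)
      (measurableSet_lt measurable_snd measurable_fst.snd)
  have hsingleton : Measurable fun p : α × ℝ => κ p.1 {p.2} :=
    Kernel.measurable_kernel_prodMk_left (κ := κ₂)
      (measurableSet_eq_fun measurable_snd measurable_fst.snd)
  exact (hIio.ennreal_toReal.add (hsingleton.ennreal_toReal.const_mul _)).stronglyMeasurable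
    |>.integral_kernel_prod_right' (κ := η) |>.measurable

lemma relEffect_map_of_strictMonoOn {F : ℝ → ℝ} (hF : Measurable F) {B : Set ℝ}
    (hFB : StrictMonoOn F B) {μ ν : Measure ℝ} [SFinite μ]
    (hμ : ∀ᵐ y ∂μ, y ∈ B) (hν : ∀ᵐ y ∂ν, y ∈ B) :
    relEffect (μ.map F) (ν.map F) = relEffect μ ν := by
  unfold relEffect
  rw [integral_map hF.aemeasurable (measurable_relEffect_integrand _).aestronglyMeasurable]
  refine integral_congr_ae ?_
  filter_upwards [hν] with y hy
  have preimage_Iio : F ⁻¹' Iio (F y) =ᵐ[μ] Iio y :=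
    eventuallyEq_set.2 (hμ.mono fun x hx => hFB.lt_iff_lt hx hy)
  have preimage_singleton : F ⁻¹' {F y} =ᵐ[μ] ({y} : Set ℝ) :=
    eventuallyEq_set.2 (hμ.mono fun x hx => hFB.injOn.eq_iff hx hy)
  rw [Measure.map_apply hF measurableSet_Iio, Measure.map_apply hF (measurableSet_singleton _),
    measure_congr preimage_Iio, measure_congr preimage_singleton]

lemma alphaCoeff_map_of_injOn {E E' : Type*} [MeasurableSpace E] [MeasurableSpace E']
    [MeasurableEq E'] {μ : Measure E} [SFinite μ] {G : E → E'} (hG : Measurable G) {A : Set E}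
    (hA : ∀ᵐ x ∂μ, x ∈ A) (hGA : InjOn G A) :
    alphaCoeff (μ.map G) = alphaCoeff μ := by
  unfold alphaCoeff
  rw [integral_map hG.aemeasurable
    (μ.map G).measurable_measure_singleton.ennreal_toReal.aestronglyMeasurable]
  congr 1
  refine integral_congr_ae ?_
  filter_upwards [hA] with x hx
  have preimage_singleton : G ⁻¹' {G x} =ᵐ[μ] ({x} : Set E) :=
    eventuallyEq_set.2 (hA.mono fun z hz => hGA.eq_iff hz hx)
  rw [Measure.map_apply hG (measurableSet_singleton _), measure_congr preimage_singleton]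

lemma exists_measurable_leftInverse_ae {E E' : Type*} [MeasurableSpace E] [StandardBorelSpace E]
    [Nonempty E] [MeasurableSpace E'] [MeasurableSpace.CountablySeparated E'] {μ : Measure E}
    {G : E → E'} (hG : Measurable G) {A : Set E} (hA : ∀ᵐ x ∂μ, x ∈ A) (hGA : InjOn G A) :
    ∃ H : E' → E, Measurable H ∧ ∀ᵐ x ∂μ, H (G x) = x := by
  set A' := (toMeasurable μ Aᶜ)ᶜ
  have hA'A : A' ⊆ A := compl_subset_comm.1 (subset_toMeasurable μ Aᶜ)
  have := (measurableSet_toMeasurable μ Aᶜ).compl.standardBorel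
  have hGA' : MeasurableEmbedding fun a : A' => G a :=
    (hG.comp measurable_subtype_coe).measurableEmbedding
      fun a b hab => Subtype.ext (hGA (hA'A a.2) (hA'A b.2) hab)
  obtain ⟨H, hH, hHG⟩ :=
    hGA'.exists_measurable_extend measurable_subtype_coe fun _ => ‹Nonempty E›
  refine ⟨H, hH, ?_⟩
  have hA' : ∀ᵐ x ∂μ, x ∈ A' := by
    change μ A'ᶜ = 0
    rw [compl_compl, measure_toMeasurable]
    exact ae_iff.1 hA
  filter_upwards [hA'] with x hx using congrFun hHG ⟨x, hx⟩

namespace ProbabilityTheory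

variable {Ω E E' 𝓨 𝓩 : Type*} [MeasurableSpace Ω] [MeasurableSpace E] [MeasurableSpace E']
  [MeasurableSpace 𝓨] [StandardBorelSpace 𝓨] [Nonempty 𝓨] {P : Measure Ω} [IsFiniteMeasure P]
  {X : Ω → E} {Y : Ω → 𝓨}

lemma condDistrib_comp_right_ae_eq (hX : AEMeasurable X P) (hY : AEMeasurable Y P)
    {G : E → E'} (hG : Measurable G) {H : E' → E} (hH : Measurable H)
    (hHG : ∀ᵐ x ∂P.map X, H (G x) = x) :
    condDistrib Y (G ∘ X) P =ᵐ[P.map (G ∘ X)] (condDistrib Y X P).comap H hH := by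
  refine condDistrib_ae_eq_of_measure_eq_compProd (G ∘ X) hY ?_
  have hcond : HasCondDistrib Y X (((condDistrib Y X P).comap H hH).comap G hG) P := by
    refine ⟨by fun_prop, ?_⟩
    rw [← compProd_map_condDistrib hY]
    refine Measure.compProd_congr ?_
    filter_upwards [hHG] with x hx
    rw [Kernel.comap_apply, Kernel.comap_apply, hx]
  exact hcond.comp_right.map_eq

lemma condDistrib_comp_comp_ae_eq [MeasurableSpace 𝓩] [StandardBorelSpace 𝓩] [Nonempty 𝓩]
    (hX : AEMeasurable X P) (hY : AEMeasurable Y P) {G : E → E'} (hG : Measurable G)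
    {H : E' → E} (hH : Measurable H) (hHG : ∀ᵐ x ∂P.map X, H (G x) = x) {F : 𝓨 → 𝓩}
    (hF : Measurable F) :
    ∀ᵐ x ∂P.map X, condDistrib (F ∘ Y) (G ∘ X) P (G x) = (condDistrib Y X P x).map F := by
  have h : condDistrib (F ∘ Y) (G ∘ X) P =ᵐ[(P.map X).map G]
      ((condDistrib Y X P).comap H hH).map F := by
    rw [AEMeasurable.map_map_of_aemeasurable hG.aemeasurable hX]
    filter_upwards [condDistrib_comp (G ∘ X) hY hF,
      condDistrib_comp_right_ae_eq hX hY hG hH hHG] with z hcomp hright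
    rw [hcomp, Kernel.map_apply _ hF, Kernel.map_apply _ hF, hright]
  filter_upwards [ae_of_ae_map hG.aemeasurable h, hHG] with x hx hHx
  rw [hx, Kernel.map_apply _ hF, Kernel.comap_apply, hHx]

lemma ae_ae_condDistrib_of_ae_map (hX : AEMeasurable X P) (hY : AEMeasurable Y P)
    {p : 𝓨 → Prop} (h : ∀ᵐ y ∂P.map Y, p y) :
    ∀ᵐ x ∂P.map X, ∀ᵐ y ∂condDistrib Y X P x, p y := by
  refine Measure.ae_ae_of_ae_compProd (p := fun z => p z.2) ?_
  rw [compProd_map_condDistrib hY]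
  rw [← Measure.snd_map_prodMk₀ hX] at h
  exact ae_of_ae_map measurable_snd.aemeasurable h

end ProbabilityTheory

theorem sepCoeff_comp_of_injOn_of_strictMonoOn {Ω E E' : Type*} [MeasurableSpace Ω]
    [MeasurableSpace E] [StandardBorelSpace E] [Nonempty E] [MeasurableSpace E']
    [StandardBorelSpace E'] (P : Measure Ω) [IsFiniteMeasure P] {X : Ω → E} {Y : Ω → ℝ}
    (hX : Measurable X) (hY : Measurable Y) {G : E → E'} (hG : Measurable G) {A : Set E}
    (hA : ∀ᵐ x ∂P.map X, x ∈ A) (hGA : InjOn G A) {F : ℝ → ℝ} (hF : Measurable F)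
    {B : Set ℝ} (hB : ∀ᵐ y ∂P.map Y, y ∈ B) (hFB : StrictMonoOn F B) :
    sepCoeff P (F ∘ Y) (G ∘ X) = sepCoeff P Y X := by
  obtain ⟨H, hH, hHG⟩ := exists_measurable_leftInverse_ae hG hA hGA
  have hκ' := condDistrib_comp_comp_ae_eq hX.aemeasurable hY.aemeasurable hG hH hHG hF
  have hκB := ae_ae_condDistrib_of_ae_map hX.aemeasurable hY.aemeasurable hB
  set κ' := condDistrib (F ∘ Y) (G ∘ X) P
  have hintegrand : Measurable fun q : E' × E' =>
      (relEffect (κ' q.1) (κ' q.2) - relEffect (κ' q.2) (κ' q.1)) ^ 2 := by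
    have h : Measurable fun q : E' × E' => relEffect (κ' q.1) (κ' q.2) :=
      measurable_relEffect (κ'.comap Prod.fst measurable_fst) (κ'.comap Prod.snd measurable_snd)
    exact (h.sub (h.comp measurable_swap)).pow_const 2
  unfold sepCoeff
  rw [← Measure.map_map hG hX, alphaCoeff_map_of_injOn hG hA hGA,
    Measure.map_prod_map _ _ hG hG,
    integral_map (hG.prodMap hG).aemeasurable hintegrand.aestronglyMeasurable]
  congr 1
  refine integral_congr_ae ?_
  filter_upwards [Measure.quasiMeasurePreserving_fst.ae (hκ'.and hκB),
    Measure.quasiMeasurePreserving_snd.ae (hκ'.and hκB)] with q ⟨h₁, hB₁⟩ ⟨h₂, hB₂⟩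
  rw [Prod.map_fst, Prod.map_snd, h₁, h₂, relEffect_map_of_strictMonoOn hF hFB hB₁ hB₂,
    relEffect_map_of_strictMonoOn hF hFB hB₂ hB₁]

theorem sepCoeff_distributional_invariance_general
    {Ω : Type*} [MeasurableSpace Ω] {p : ℕ}
    (P : Measure Ω) [IsProbabilityMeasure P]
    (X : Ω → (Fin p → ℝ)) (Y : Ω → ℝ)
    (hX : Measurable X) (hY : Measurable Y) :
    sepCoeff P Y X
      = sepCoeff P (fun ω => rvCdf P Y (Y ω))
          (fun ω (i : Fin p) => rvCdf P (fun ω' => X ω' i) (X ω i)) := by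
  have := Measure.isProbabilityMeasure_map (μ := P) hX.aemeasurable
  have := Measure.isProbabilityMeasure_map (μ := P) hY.aemeasurable
  set G : (Fin p → ℝ) → Fin p → ℝ := fun x i => cdf ((P.map X).map fun x => x i) (x i)
  have hrvCdf : (fun ω (i : Fin p) => rvCdf P (fun ω' => X ω' i) (X ω i)) = G ∘ X := by
    ext ω i
    rw [rvCdf_eq_cdf_map (Z := fun ω => X ω i) P ((measurable_pi_apply i).comp hX)]
    simp only [G, Function.comp_apply, Measure.map_map (measurable_pi_apply i) hX]
    rfl
  have hG : Measurable G :=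
    measurable_pi_lambda _ fun i => (cdf _).mono.measurable.comp (measurable_pi_apply i)
  obtain ⟨A, hA, hGA⟩ := exists_ae_mem_injOn_cdf_marginals (P.map X)
  obtain ⟨B, hB, hFB⟩ := exists_ae_mem_strictMonoOn_cdf (P.map Y)
  rw [rvCdf_eq_cdf_map P hY, hrvCdf, ← Function.comp_def,
    sepCoeff_comp_of_injOn_of_strictMonoOn P hX hY hG hA hGA (cdf _).mono.measurable hB hFB]

/-- Distributional invariance:
`Λ(Y|X) = Λ(F_Y(Y) | (F_{X₁}(X₁), …, F_{X_p}(X_p)))`. -/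
theorem sepCoeff_distributional_invariance
    {Ω : Type*} [MeasurableSpace Ω] {p : ℕ} (hp : 1 ≤ p)
    (P : Measure Ω) [IsProbabilityMeasure P]
    (X : Ω → (Fin p → ℝ)) (Y : Ω → ℝ)
    (hX : Measurable X) (hY : Measurable Y)
    (hXnd : ∃ k, Nondegenerate P fun ω => X ω k)
    (hYnd : Nondegenerate P Y) :
    sepCoeff P Y X
      = sepCoeff P (fun ω => rvCdf P Y (Y ω))
          (fun ω (i : Fin p) => rvCdf P (fun ω' => X ω' i) (X ω i)) :=
  sepCoeff_distributional_invariance_general P X Y hX hY
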